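/- The bilinear form \phi_1 on the three-point Witt algebra defined on basis elements by \phi_1(d^1_k, d^1_l) = 2(l^2-l)(2l-1)\delta_{k+l,1} + (l^3-l)\delta_{k+l,0}, \phi_1(d^1_k, d_l) = 6(-1)^{k+l} 2^{k+l} (k-1)k l (2k+2l-3)!!/(k+l+1)!, \phi_1(d_l, d^1_k) = -\phi_1(d^1_k, d_l), and \phi_1(d_k, d_l) = l(l+1)(l+2)\delta_{k+l,-2} + 4l(2l+1)(l+1)\delta_{k+l,-1} + 4l(2l-1)(2l+1)\delta_{k+l,0}, is a skew-symmetric 2-cocycle: it satisfies \phi_1([a,b],c) + \phi_1([b,c],a) + \phi_1([c,a],b) = 0 for all a, b, c in the algebra. -/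

import Mathlib

/-- The underlying space of the three-point Witt algebra, with basis indexed by
`Bool × ℤ`: `(false, n) ↔ d_n` and `(true, n) ↔ d¹_n`. -/
abbrev WittV : Type := (Bool × ℤ) →₀ ℂ

noncomputable def eW (p : Bool × ℤ) : WittV := Finsupp.single p 1

/-- The three-point Witt bracket on basis elements. -/
noncomputable def brBasis : Bool × ℤ → Bool × ℤ → WittV
  | (false, m), (false, n) =>
      ((n : ℂ) - m) • (eW (false, m + n + 1) + (4 : ℂ) • eW (false, m + n))
  | (true, m), (true, n) => ((n : ℂ) - m) • eW (false, m + n - 1)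
  | (false, m), (true, n) =>
      ((n : ℂ) - m - 1) • eW (true, m + n + 1) +
        (4 * (n : ℂ) - 4 * m - 2) • eW (true, m + n)
  | (true, m), (false, n) =>
      -(((m : ℂ) - n - 1) • eW (true, n + m + 1) +
        (4 * (m : ℂ) - 4 * n - 2) • eW (true, n + m))

/-- The three-point Witt bracket, extended bilinearly. -/
noncomputable def brW : WittV →ₗ[ℂ] WittV →ₗ[ℂ] WittV :=
  Finsupp.lift (WittV →ₗ[ℂ] WittV) ℂ (Bool × ℤ) fun p =>
    Finsupp.lift WittV ℂ (Bool × ℤ) fun q => brBasis p q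

/-- The odd double factorial `j‼` extended to negative odd integers by the
convention `(-2k-1)‼ = (-1)ᵏ/(2k-1)‼`. -/
noncomputable def oddDF (j : ℤ) : ℂ :=
  if -1 ≤ j then (Nat.doubleFactorial j.toNat : ℂ)
  else (-1) ^ ((-j - 1) / 2).toNat / (Nat.doubleFactorial (-j - 2).toNat : ℂ)

/-- `1/j!`, extended by `0` for negative `j`. -/
noncomputable def invFact (j : ℤ) : ℂ :=
  if 0 ≤ j then ((j.toNat).factorial : ℂ)⁻¹ else 0

/-- `φ₁(d¹_k, d_l) = 6(-1)^{k+l} 2^{k+l} (k-1)k l (2k+2l-3)‼/(k+l+1)!`. -/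
noncomputable def phiMix (k l : ℤ) : ℂ :=
  6 * (-1 : ℂ) ^ (k + l) * (2 : ℂ) ^ (k + l) * ((k : ℂ) - 1) * k * l *
    oddDF (2 * k + 2 * l - 3) * invFact (k + l + 1)

/-- The cocycle `φ₁` on basis elements. -/
noncomputable def phiBasis : Bool × ℤ → Bool × ℤ → ℂ
  | (true, k), (true, l) =>
      (if k + l = 1 then 2 * ((l : ℂ) ^ 2 - l) * (2 * l - 1) else 0) +
        (if k + l = 0 then (l : ℂ) ^ 3 - l else 0)
  | (true, k), (false, l) => phiMix k l
  | (false, k), (true, l) => -phiMix l k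
  | (false, k), (false, l) =>
      (if k + l = -2 then (l : ℂ) * (l + 1) * (l + 2) else 0) +
        (if k + l = -1 then 4 * (l : ℂ) * (2 * l + 1) * (l + 1) else 0) +
          (if k + l = 0 then 4 * (l : ℂ) * (2 * l - 1) * (2 * l + 1) else 0)

/-- The cocycle `φ₁`, extended bilinearly. -/
noncomputable def phiW : WittV →ₗ[ℂ] WittV →ₗ[ℂ] ℂ :=
  Finsupp.lift (WittV →ₗ[ℂ] ℂ) ℂ (Bool × ℤ) fun p =>
    Finsupp.lift ℂ ℂ (Bool × ℤ) fun q => phiBasis p q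

/-!
Both identities are linear in each argument, so it suffices to check them on the basis
`d_n, d¹_n`. On basis vectors skew-symmetry is read off the formulas. In the cocycle identity
every Kronecker delta depends only on the total index `s`, so the delta-valued parts of `φ₁`
(types `d d d` and `d¹ d¹ d`) leave finitely many polynomial identities, one per relevant `s`.
The mixed values factor as `φ₁(d¹_k, d_l) = c_{k+l} (k-1) k l` with
`c_s = 6 (-2)^s (2s-3)‼ / (s+1)!`. On `d¹ d d` the identity is `(m-n)(k²-k+mn)` times the
recurrence `(s+2) c_{s+1} + 2(2s-1) c_s = 0`, which holds for all `s ∈ ℤ` thanks to the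
conventions for `(2s-3)‼` and `1/(s+1)!` at negative arguments; on `d¹ d¹ d¹` the three terms
share the coefficient `c_{k+l+n-1}` and cancel as polynomials.
-/

section BilinearOnFreeModule

variable {R α M : Type*} [CommRing R] [AddCommGroup M] [Module R M]

theorem apply_eq_neg_swap_of_single (B : (α →₀ R) →ₗ[R] (α →₀ R) →ₗ[R] M)
    (h : ∀ p q, B (.single p 1) (.single q 1) = -B (.single q 1) (.single p 1)) (x y : α →₀ R) :
    B x y = -B y x := by
  have hB : B = -B.flip :=
    LinearMap.ext_basis Finsupp.basisSingleOne Finsupp.basisSingleOne (by simpa using h)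
  exact LinearMap.congr_fun₂ hB x y

theorem cyclic_sum_eq_zero_of_single (B : (α →₀ R) →ₗ[R] (α →₀ R) →ₗ[R] (α →₀ R))
    (φ : (α →₀ R) →ₗ[R] (α →₀ R) →ₗ[R] M)
    (h : ∀ p q r : α, φ (B (.single p 1) (.single q 1)) (.single r 1) +
      φ (B (.single q 1) (.single r 1)) (.single p 1) +
      φ (B (.single r 1) (.single p 1)) (.single q 1) = 0) (a b c : α →₀ R) :
    φ (B a b) c + φ (B b c) a + φ (B c a) b = 0 := by
  let S := B.compr₂ φ
  -- the trilinear map `(a, b, c) ↦ S a b c + S b c a + S c a b`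
  let T := S + (LinearMap.lflip.toLinearMap ∘ₗ S).flip + LinearMap.lflip.toLinearMap ∘ₗ S.flip
  have hT : T = 0 :=
    LinearMap.ext_basis Finsupp.basisSingleOne Finsupp.basisSingleOne fun p q =>
      Finsupp.basisSingleOne.ext fun r => by simpa [T, S] using h p q r
  exact congr($hT a b c)

end BilinearOnFreeModule

open Nat

lemma phiW_single (p q : Bool × ℤ) : phiW (.single p 1) (.single q 1) = phiBasis p q := by
  simp [phiW]

lemma brW_single (p q : Bool × ℤ) : brW (.single p 1) (.single q 1) = brBasis p q := by
  simp [brW]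

lemma phiBasis_skew (p q : Bool × ℤ) : phiBasis p q = -phiBasis q p := by
  obtain ⟨_ | _, k⟩ := p <;> obtain ⟨_ | _, l⟩ := q
  · obtain ⟨s, rfl⟩ : ∃ s, l = s - k := ⟨k + l, by ring⟩
    by_cases hs : -2 ≤ s ∧ s ≤ 0
    · obtain ⟨hlo, hhi⟩ := hs
      interval_cases s <;> simp (disch := omega) only [phiBasis, if_pos, if_neg] <;> push_cast <;> ring
    · simp (disch := omega) only [phiBasis, if_neg]
      ring
  · simp only [phiBasis]
  · simp only [phiBasis, neg_neg]
  · obtain ⟨s, rfl⟩ : ∃ s, l = s - k := ⟨k + l, by ring⟩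
    by_cases hs : 0 ≤ s ∧ s ≤ 1
    · obtain ⟨hlo, hhi⟩ := hs
      interval_cases s <;> simp (disch := omega) only [phiBasis, if_pos, if_neg] <;> push_cast <;> ring
    · simp (disch := omega) only [phiBasis, if_neg]
      ring

lemma oddDF_natCast (n : ℕ) : oddDF n = (n‼ : ℂ) := by
  simp [oddDF]

lemma oddDF_neg_one : oddDF (-1) = 1 := by
  simp [oddDF]

lemma oddDF_neg_two_mul_sub_three (m : ℕ) :
    oddDF (-2 * m - 3) = (-1) ^ (m + 1) / ((2 * m + 1)‼ : ℂ) := by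
  rw [oddDF, if_neg (by omega), show (-(-2 * (m : ℤ) - 3) - 1) / 2 = ((m + 1 : ℕ) : ℤ) by omega,
    show -(-2 * (m : ℤ) - 3) - 2 = ((2 * m + 1 : ℕ) : ℤ) by omega, Int.toNat_natCast,
    Int.toNat_natCast]

lemma oddDF_two_mul_sub_one (s : ℤ) : oddDF (2 * s - 1) = (2 * s - 1) * oddDF (2 * s - 3) := by
  rcases (by omega : 2 ≤ s ∨ s = 1 ∨ s = 0 ∨ s ≤ -1) with hs | rfl | rfl | hs
  · obtain ⟨n, rfl⟩ : ∃ n : ℕ, s = n + 2 := ⟨(s - 2).toNat, by omega⟩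
    rw [show 2 * ((n : ℤ) + 2) - 1 = ((2 * n + 1 + 2 : ℕ) : ℤ) by omega,
      show 2 * ((n : ℤ) + 2) - 3 = ((2 * n + 1 : ℕ) : ℤ) by omega, oddDF_natCast, oddDF_natCast,
      Nat.doubleFactorial_add_two]
    push_cast
    ring
  · rw [show 2 * (1 : ℤ) - 1 = ((1 : ℕ) : ℤ) by norm_num, show 2 * (1 : ℤ) - 3 = -1 by norm_num,
      oddDF_natCast, oddDF_neg_one]
    norm_num
  · rw [show 2 * (0 : ℤ) - 1 = -1 by norm_num,
      show 2 * (0 : ℤ) - 3 = -2 * ((0 : ℕ) : ℤ) - 3 by norm_num, oddDF_neg_one,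
      oddDF_neg_two_mul_sub_three]
    norm_num
  · obtain ⟨m, rfl⟩ : ∃ m : ℕ, s = -m - 1 := ⟨(-s - 1).toNat, by omega⟩
    rw [show 2 * (-(m : ℤ) - 1) - 1 = -2 * (m : ℕ) - 3 by ring,
      show 2 * (-(m : ℤ) - 1) - 3 = -2 * ((m + 1 : ℕ) : ℤ) - 3 by push_cast; ring,
      oddDF_neg_two_mul_sub_three, oddDF_neg_two_mul_sub_three,
      show 2 * (m + 1) + 1 = 2 * m + 1 + 2 by ring, Nat.doubleFactorial_add_two]
    have hdf : ((2 * m + 1)‼ : ℂ) ≠ 0 := Nat.cast_ne_zero.mpr (Nat.doubleFactorial_pos _).ne'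
    have hodd : (2 * m + 1 + 2 : ℂ) ≠ 0 := by exact_mod_cast (by omega : 2 * m + 1 + 2 ≠ 0)
    push_cast
    field_simp
    ring

lemma invFact_natCast (n : ℕ) : invFact n = (n ! : ℂ)⁻¹ := by
  simp [invFact]

lemma invFact_of_neg {j : ℤ} (hj : j < 0) : invFact j = 0 :=
  if_neg (by omega)

lemma add_one_mul_invFact_add_one (j : ℤ) : ((j : ℂ) + 1) * invFact (j + 1) = invFact j := by
  rcases (by omega : 0 ≤ j ∨ j = -1 ∨ j < -1) with hj | rfl | hj
  · obtain ⟨n, rfl⟩ := Int.eq_ofNat_of_zero_le hj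
    rw [show (n : ℤ) + 1 = ((n + 1 : ℕ) : ℤ) by push_cast; ring, invFact_natCast,
      invFact_natCast, Nat.factorial_succ]
    push_cast
    field_simp
  · norm_num [invFact_of_neg]
  · rw [invFact_of_neg (by omega), invFact_of_neg (by omega), mul_zero]

noncomputable def mixCoeff (s : ℤ) : ℂ :=
  6 * (-1) ^ s * 2 ^ s * oddDF (2 * s - 3) * invFact (s + 1)

lemma phiMix_eq_mixCoeff (k l : ℤ) : phiMix k l = mixCoeff (k + l) * ((k : ℂ) - 1) * k * l := by
  rw [phiMix, mixCoeff, show 2 * (k + l) - 3 = 2 * k + 2 * l - 3 by ring]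
  ring

lemma mixCoeff_recurrence (s : ℤ) :
    ((s : ℂ) + 2) * mixCoeff (s + 1) + 2 * (2 * s - 1) * mixCoeff s = 0 := by
  have hfact := add_one_mul_invFact_add_one (s + 1)
  push_cast at hfact
  rw [mixCoeff, mixCoeff, show 2 * (s + 1) - 3 = 2 * s - 1 by ring, oddDF_two_mul_sub_one,
    zpow_add_one₀ (by norm_num), zpow_add_one₀ (by norm_num)]
  linear_combination (-12 * (2 * (s : ℂ) - 1) * (-1) ^ s * 2 ^ s * oddDF (2 * s - 3)) * hfact

lemma phiBasis_cyclic_ddd (m n p : ℤ) :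
    ((n : ℂ) - m) * (phiBasis (false, m + n + 1) (false, p) + 4 * phiBasis (false, m + n) (false, p))
    + ((p : ℂ) - n) * (phiBasis (false, n + p + 1) (false, m) + 4 * phiBasis (false, n + p) (false, m))
    + ((m : ℂ) - p) * (phiBasis (false, p + m + 1) (false, n) + 4 * phiBasis (false, p + m) (false, n))
    = 0 := by
  obtain ⟨s, rfl⟩ : ∃ s, p = s - m - n := ⟨m + n + p, by ring⟩
  by_cases hs : -3 ≤ s ∧ s ≤ 0
  · obtain ⟨hlo, hhi⟩ := hs
    interval_cases s <;> simp (disch := omega) only [phiBasis, if_pos, if_neg] <;> push_cast <;> ring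
  · simp (disch := omega) only [phiBasis, if_neg]
    ring

lemma phiBasis_cyclic_d1d1d (k l n : ℤ) :
    ((l : ℂ) - k) * phiBasis (false, k + l - 1) (false, n)
    - (((l : ℂ) - n - 1) * phiBasis (true, n + l + 1) (true, k)
        + (4 * (l : ℂ) - 4 * n - 2) * phiBasis (true, n + l) (true, k))
    + ((k : ℂ) - n - 1) * phiBasis (true, n + k + 1) (true, l)
        + (4 * (k : ℂ) - 4 * n - 2) * phiBasis (true, n + k) (true, l) = 0 := by
  obtain ⟨s, rfl⟩ : ∃ s, n = s - k - l := ⟨k + l + n, by ring⟩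
  by_cases hs : -1 ≤ s ∧ s ≤ 1
  · obtain ⟨hlo, hhi⟩ := hs
    interval_cases s <;> simp (disch := omega) only [phiBasis, if_pos, if_neg] <;> push_cast <;> ring
  · simp (disch := omega) only [phiBasis, if_neg]
    ring

lemma phiBasis_cyclic_d1dd (k m n : ℤ) :
    -(((k : ℂ) - m - 1) * phiBasis (true, m + k + 1) (false, n)
       + (4 * (k : ℂ) - 4 * m - 2) * phiBasis (true, m + k) (false, n))
    + ((n : ℂ) - m) * (phiBasis (false, m + n + 1) (true, k) + 4 * phiBasis (false, m + n) (true, k))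
    + (((k : ℂ) - n - 1) * phiBasis (true, n + k + 1) (false, m)
       + (4 * (k : ℂ) - 4 * n - 2) * phiBasis (true, n + k) (false, m)) = 0 := by
  simp only [phiBasis, phiMix_eq_mixCoeff, show m + k + 1 + n = k + m + n + 1 by ring,
    show m + k + n = k + m + n by ring, show k + (m + n + 1) = k + m + n + 1 by ring,
    show k + (m + n) = k + m + n by ring, show n + k + 1 + m = k + m + n + 1 by ring,
    show n + k + m = k + m + n by ring]
  have hrec := mixCoeff_recurrence (k + m + n)
  push_cast at hrec ⊢
  linear_combination ((m : ℂ) - n) * ((k : ℂ) ^ 2 - k + m * n) * hrec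

lemma phiBasis_cyclic_d1d1d1 (k l n : ℤ) :
    ((l : ℂ) - k) * phiBasis (false, k + l - 1) (true, n)
    + ((n : ℂ) - l) * phiBasis (false, l + n - 1) (true, k)
    + ((k : ℂ) - n) * phiBasis (false, n + k - 1) (true, l) = 0 := by
  simp only [phiBasis, phiMix_eq_mixCoeff, show n + (k + l - 1) = k + l + n - 1 by ring,
    show k + (l + n - 1) = k + l + n - 1 by ring, show l + (n + k - 1) = k + l + n - 1 by ring]
  push_cast
  ring

lemma phiW_cyclic_single (p q r : Bool × ℤ) :
    phiW (brW (.single p 1) (.single q 1)) (.single r 1) +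
      phiW (brW (.single q 1) (.single r 1)) (.single p 1) +
      phiW (brW (.single r 1) (.single p 1)) (.single q 1) = 0 := by
  obtain ⟨_ | _, x⟩ := p <;> obtain ⟨_ | _, y⟩ := q <;> obtain ⟨_ | _, z⟩ := r <;>
    simp only [brW_single, brBasis, eW, map_add, map_smul, map_neg, LinearMap.add_apply,
      LinearMap.smul_apply, LinearMap.neg_apply, phiW_single, smul_eq_mul]
  · linear_combination phiBasis_cyclic_ddd x y z
  · linear_combination phiBasis_cyclic_d1dd z x y
  · linear_combination phiBasis_cyclic_d1dd y z x
  · linear_combination phiBasis_cyclic_d1d1d y z x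
  · linear_combination phiBasis_cyclic_d1dd x y z
  · linear_combination phiBasis_cyclic_d1d1d z x y
  · linear_combination phiBasis_cyclic_d1d1d x y z
  · linear_combination phiBasis_cyclic_d1d1d1 x y z

/-- `φ₁` is a skew-symmetric 2-cocycle on the three-point Witt
algebra: `φ₁(x,y) = -φ₁(y,x)` and
`φ₁([a,b],c) + φ₁([b,c],a) + φ₁([c,a],b) = 0` for all `a, b, c`. -/
theorem phi1_skew_cocycle :
    (∀ x y : WittV, phiW x y = -phiW y x) ∧
    ∀ a b c : WittV,
      phiW (brW a b) c + phiW (brW b c) a + phiW (brW c a) b = 0 :=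
  ⟨apply_eq_neg_swap_of_single phiW fun p q => by simpa only [phiW_single] using phiBasis_skew p q,
    cyclic_sum_eq_zero_of_single brW phiW phiW_cyclic_single⟩
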